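/- Let G be a nonabelian finite 2-group containing a cyclic subgroup of index 2. Then G is isomorphic to a dihedral group, a generalized quaternion group, a semidihedral group, or a modular 2-group. -/

import Mathlib

/-!
Write `H = ⟨x⟩` with `x` of order `2 ^ m` and pick `y ∉ H`, so that `y x y⁻¹ = x ^ k` and
`y ^ 2 = x ^ j`. Since `y ^ 2` commutes with `x` and with `y`, we get `k ^ 2 ≡ 1` and
`(k - 1) j ≡ 0 (mod 2 ^ m)`, and `k ≢ 1` because `G` is nonabelian. The square roots of unity
modulo `2 ^ m` are `±1` and `2 ^ (m - 1) ± 1`, and replacing `y` by `y x ^ t` replaces `j` by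
`j + (k + 1) t` without changing `k`. In each case but one a suitable `t` makes `y x ^ t` an
involution (dihedral, semidihedral, modular); the exception, `k ≡ -1` and `j ≡ 2 ^ (m - 1)`,
is the generalized quaternion group.
-/

/-- `G` is presented as the dihedral group of order `2 ^ n`. -/
def IsDihedralPres (G : Type*) [Group G] (n : ℕ) : Prop :=
  ∃ x y : G, orderOf x = 2 ^ (n - 1) ∧ y ^ 2 = 1 ∧ y * x * y⁻¹ = x⁻¹ ∧
    Subgroup.closure {x, y} = ⊤

/-- `G` is presented as the generalized quaternion group of order `2 ^ n`. -/
def IsGeneralizedQuaternionPres (G : Type*) [Group G] (n : ℕ) : Prop :=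
  ∃ x y : G, orderOf x = 2 ^ (n - 1) ∧ y ^ 2 = x ^ 2 ^ (n - 2) ∧ y * x * y⁻¹ = x⁻¹ ∧
    Subgroup.closure {x, y} = ⊤

/-- `G` is presented as the semidihedral group of order `2 ^ n`. -/
def IsSemidihedralPres (G : Type*) [Group G] (n : ℕ) : Prop :=
  ∃ x y : G, orderOf x = 2 ^ (n - 1) ∧ y ^ 2 = 1 ∧ y * x * y⁻¹ = x ^ 2 ^ (n - 2) * x⁻¹ ∧
    Subgroup.closure {x, y} = ⊤

/-- `G` is presented as the modular 2-group of order `2 ^ n`. -/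
def IsModularPres (G : Type*) [Group G] (n : ℕ) : Prop :=
  ∃ x y : G, orderOf x = 2 ^ (n - 1) ∧ y ^ 2 = 1 ∧ y * x * y⁻¹ = x ^ (2 ^ (n - 2) + 1) ∧
    Subgroup.closure {x, y} = ⊤

namespace Int

variable {a b j k : ℤ} {m : ℕ}

theorem ModEq.two_pow_succ (h : a ≡ b [ZMOD 2 ^ m]) :
    a ≡ b [ZMOD 2 ^ (m + 1)] ∨ a ≡ b + 2 ^ m [ZMOD 2 ^ (m + 1)] := by
  obtain ⟨d, hd⟩ := h.symm.dvd
  rcases even_or_odd' d with ⟨e, rfl | rfl⟩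
  · exact .inl (modEq_iff_dvd.mpr ⟨-e, by rw [pow_succ]; linear_combination -hd⟩)
  · exact .inr (modEq_iff_dvd.mpr ⟨-e, by rw [pow_succ]; linear_combination -hd⟩)

theorem modEq_zero_of_two_mul (h : 2 * a ≡ 0 [ZMOD 2 ^ (m + 1)]) : a ≡ 0 [ZMOD 2 ^ m] := by
  rw [modEq_zero_iff_dvd, pow_succ'] at *
  exact (mul_dvd_mul_iff_left two_ne_zero).mp h

theorem modEq_zero_of_odd_mul {u : ℤ} (hu : Odd u) (h : u * a ≡ 0 [ZMOD 2 ^ m]) :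
    a ≡ 0 [ZMOD 2 ^ m] := by
  rw [modEq_zero_iff_dvd] at *
  exact (isCoprime_two_left.mpr hu).pow_left.dvd_of_dvd_mul_left h

theorem modEq_one_or_neg_one_of_sq_modEq_one (h : k * k ≡ 1 [ZMOD 2 ^ (m + 2)]) :
    k ≡ 1 [ZMOD 2 ^ (m + 1)] ∨ k ≡ -1 [ZMOD 2 ^ (m + 1)] := by
  have hdvd : 2 ^ (m + 2) ∣ k * k - 1 := h.symm.dvd
  have hodd : Odd k := by
    have : Even (k * k - 1) := even_iff_two_dvd.mpr ((dvd_pow_self 2 (by omega)).trans hdvd)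
    exact (Int.odd_mul.mp (by simpa [Int.even_sub_one, Int.not_even_iff_odd] using this)).1
  obtain ⟨a, rfl⟩ := hodd
  -- `k² - 1 = 4 a (a + 1)`, and of the coprime factors `a`, `a + 1` one is odd.
  have hprod : 2 ^ m ∣ a * (a + 1) := by
    rw [show (2 : ℤ) ^ (m + 2) = 4 * 2 ^ m by ring,
      show (2 * a + 1) * (2 * a + 1) - 1 = 4 * (a * (a + 1)) by ring] at hdvd
    exact (mul_dvd_mul_iff_left (by norm_num)).mp hdvd
  rcases even_or_odd a with ha | ha
  · obtain ⟨c, hc⟩ : 2 ^ m ∣ a := prime_two.pow_dvd_of_dvd_mul_right m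
      (by simpa [← even_iff_two_dvd, Int.even_add_one] using ha) hprod
    exact .inl (modEq_iff_dvd.mpr ⟨c, by rw [pow_succ']; linear_combination 2 * hc⟩).symm
  · obtain ⟨c, hc⟩ : 2 ^ m ∣ a + 1 := prime_two.pow_dvd_of_dvd_mul_left m
      (by simpa [← even_iff_two_dvd, Int.not_even_iff_odd] using ha) hprod
    exact .inr (modEq_iff_dvd.mpr ⟨c, by rw [pow_succ']; linear_combination 2 * hc⟩).symm

theorem sq_modEq_one_two_pow (h : k * k ≡ 1 [ZMOD 2 ^ (m + 2)]) :
    k ≡ 1 [ZMOD 2 ^ (m + 2)] ∨ k ≡ -1 [ZMOD 2 ^ (m + 2)] ∨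
      k ≡ 2 ^ (m + 1) + 1 [ZMOD 2 ^ (m + 2)] ∨ k ≡ 2 ^ (m + 1) - 1 [ZMOD 2 ^ (m + 2)] := by
  rcases modEq_one_or_neg_one_of_sq_modEq_one h with h1 | h1 <;>
    rcases h1.two_pow_succ with h2 | h2
  · exact .inl h2
  · exact .inr (.inr (.inl (by rwa [add_comm (1 : ℤ)] at h2)))
  · exact .inr (.inl h2)
  · exact .inr (.inr (.inr (by rwa [neg_add_eq_sub] at h2)))

theorem two_le_of_sq_modEq_one (h : k * k ≡ 1 [ZMOD 2 ^ m]) (hk : ¬ k ≡ 1 [ZMOD 2 ^ m]) :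
    2 ≤ m := by
  by_contra! hm
  interval_cases m
  · exact hk (by simp [Int.modEq_one])
  · rcases emod_two_eq_zero_or_one k with h0 | h0 <;> simp_all [Int.ModEq, Int.mul_emod]

theorem modEq_zero_or_of_modEq_neg_one (hk : k ≡ -1 [ZMOD 2 ^ (m + 2)])
    (hkj : (k - 1) * j ≡ 0 [ZMOD 2 ^ (m + 2)]) :
    j ≡ 0 [ZMOD 2 ^ (m + 2)] ∨ j ≡ 2 ^ (m + 1) [ZMOD 2 ^ (m + 2)] := by
  have h2j : 2 * -j ≡ 0 [ZMOD 2 ^ (m + 2)] :=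
    calc 2 * -j = (-1 - 1) * j := by ring
      _ ≡ (k - 1) * j [ZMOD 2 ^ (m + 2)] := ((hk.sub_right 1).mul_right j).symm
      _ ≡ 0 [ZMOD 2 ^ (m + 2)] := hkj
  have hj : j ≡ 0 [ZMOD 2 ^ (m + 1)] := by
    simpa [modEq_zero_iff_dvd] using modEq_zero_of_two_mul h2j
  simpa using hj.two_pow_succ

theorem exists_add_mul_modEq_zero_of_modEq_two_pow_sub_one
    (hk : k ≡ 2 ^ (m + 2) - 1 [ZMOD 2 ^ (m + 3)]) (hkj : (k - 1) * j ≡ 0 [ZMOD 2 ^ (m + 3)]) :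
    ∃ t, j + (k + 1) * t ≡ 0 [ZMOD 2 ^ (m + 3)] := by
  have h2j : 2 * ((2 ^ (m + 1) - 1) * j) ≡ 0 [ZMOD 2 ^ (m + 3)] :=
    calc 2 * ((2 ^ (m + 1) - 1) * j) = (2 ^ (m + 2) - 1 - 1) * j := by ring
      _ ≡ (k - 1) * j [ZMOD 2 ^ (m + 3)] := ((hk.sub_right 1).mul_right j).symm
      _ ≡ 0 [ZMOD 2 ^ (m + 3)] := hkj
  have hodd : Odd ((2 : ℤ) ^ (m + 1) - 1) := ⟨2 ^ m - 1, by ring⟩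
  rcases (modEq_zero_of_odd_mul hodd (modEq_zero_of_two_mul h2j)).two_pow_succ with hj | hj
  · exact ⟨0, by simpa using hj⟩
  · refine ⟨1, ?_⟩
    calc j + (k + 1) * 1 ≡ (0 + 2 ^ (m + 2)) + (2 ^ (m + 2) - 1 + 1) * 1 [ZMOD 2 ^ (m + 3)] :=
          hj.add ((hk.add_right 1).mul_right 1)
      _ = 2 ^ (m + 3) * 1 := by ring
      _ ≡ 0 [ZMOD 2 ^ (m + 3)] := modEq_zero_iff_dvd.mpr (dvd_mul_right _ _)

theorem exists_add_mul_modEq_zero_of_modEq_two_pow_add_one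
    (hk : k ≡ 2 ^ (m + 2) + 1 [ZMOD 2 ^ (m + 3)]) (hkj : (k - 1) * j ≡ 0 [ZMOD 2 ^ (m + 3)]) :
    ∃ t, j + (k + 1) * t ≡ 0 [ZMOD 2 ^ (m + 3)] := by
  have hj : 2 ^ (m + 2) * j ≡ 0 [ZMOD 2 ^ (m + 3)] :=
    calc 2 ^ (m + 2) * j = (2 ^ (m + 2) + 1 - 1) * j := by ring
      _ ≡ (k - 1) * j [ZMOD 2 ^ (m + 3)] := ((hk.sub_right 1).mul_right j).symm
      _ ≡ 0 [ZMOD 2 ^ (m + 3)] := hkj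
  obtain ⟨i, rfl⟩ : 2 ∣ j := by
    rw [modEq_zero_iff_dvd, pow_succ] at hj
    exact (mul_dvd_mul_iff_left (by positivity)).mp hj
  -- `k + 1 ≡ 2 u` with `u = 2 ^ (m + 1) + 1` odd, so `t = -i u⁻¹ (mod 2 ^ (m + 2))` works.
  obtain ⟨a, b, hab⟩ : IsCoprime ((2 : ℤ) ^ (m + 1) + 1) (2 ^ (m + 2)) :=
    ((isCoprime_two_left.mpr ⟨2 ^ m, by ring⟩).pow_left).symm
  refine ⟨-i * a, ?_⟩
  calc 2 * i + (k + 1) * (-i * a)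
        ≡ 2 * i + (2 ^ (m + 2) + 1 + 1) * (-i * a) [ZMOD 2 ^ (m + 3)] :=
          ((hk.add_right 1).mul_right _).add_left _
    _ = 2 ^ (m + 3) * (i * b) := by linear_combination (-2 * i) * hab
    _ ≡ 0 [ZMOD 2 ^ (m + 3)] := modEq_zero_iff_dvd.mpr (dvd_mul_right _ _)

theorem exists_normalForm_of_sq_modEq_one (hk2 : k * k ≡ 1 [ZMOD 2 ^ (m + 2)])
    (hkj : (k - 1) * j ≡ 0 [ZMOD 2 ^ (m + 2)]) (hk1 : ¬ k ≡ 1 [ZMOD 2 ^ (m + 2)]) :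
    ∃ t, (k ≡ -1 [ZMOD 2 ^ (m + 2)] ∧ j + (k + 1) * t ≡ 0 [ZMOD 2 ^ (m + 2)]) ∨
      (k ≡ -1 [ZMOD 2 ^ (m + 2)] ∧ j + (k + 1) * t ≡ 2 ^ (m + 1) [ZMOD 2 ^ (m + 2)]) ∨
      (k ≡ 2 ^ (m + 1) - 1 [ZMOD 2 ^ (m + 2)] ∧ j + (k + 1) * t ≡ 0 [ZMOD 2 ^ (m + 2)]) ∨
      (k ≡ 2 ^ (m + 1) + 1 [ZMOD 2 ^ (m + 2)] ∧ j + (k + 1) * t ≡ 0 [ZMOD 2 ^ (m + 2)]) := by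
  by_cases hneg : k ≡ -1 [ZMOD 2 ^ (m + 2)]
  · refine ⟨0, ?_⟩
    simp only [mul_zero, add_zero]
    rcases modEq_zero_or_of_modEq_neg_one hneg hkj with hj | hj
    exacts [.inl ⟨hneg, hj⟩, .inr (.inl ⟨hneg, hj⟩)]
  -- For `m = 0` the roots `2 ^ (m + 1) ± 1` are `-1` and `1` again.
  rcases sq_modEq_one_two_pow hk2 with h | h | h | h
  · exact absurd h hk1
  · exact absurd h hneg
  · obtain _ | m := m
    · exact absurd (h.trans (by decide)) hneg
    · obtain ⟨t, ht⟩ := exists_add_mul_modEq_zero_of_modEq_two_pow_add_one h hkj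
      exact ⟨t, .inr (.inr (.inr ⟨h, ht⟩))⟩
  · obtain _ | m := m
    · exact absurd (h.trans (by decide)) hk1
    · obtain ⟨t, ht⟩ := exists_add_mul_modEq_zero_of_modEq_two_pow_sub_one h hkj
      exact ⟨t, .inr (.inr (.inl ⟨h, ht⟩))⟩

end Int

section Conjugation

variable {G : Type*} [Group G] {x y : G} {k j : ℤ}

theorem conj_zpow_eq_zpow_mul (hk : y * x * y⁻¹ = x ^ k) (a : ℤ) :
    y * x ^ a * y⁻¹ = x ^ (k * a) := by
  rw [← conj_zpow, hk, ← zpow_mul]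

theorem mul_zpow_sq (hk : y * x * y⁻¹ = x ^ k) (hj : y ^ 2 = x ^ j) (t : ℤ) :
    (y * x ^ t) ^ 2 = x ^ (j + (k + 1) * t) :=
  calc (y * x ^ t) ^ 2 = y * x ^ t * y⁻¹ * y ^ 2 * x ^ t := by rw [sq, sq]; group
    _ = x ^ (k * t + j + t) := by rw [conj_zpow_eq_zpow_mul hk, hj, ← zpow_add, ← zpow_add]
    _ = x ^ (j + (k + 1) * t) := by ring_nf

theorem zpow_mul_self_eq (hk : y * x * y⁻¹ = x ^ k) (hj : y ^ 2 = x ^ j) : x ^ (k * k) = x :=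
  calc x ^ (k * k) = y * (y * x * y⁻¹) * y⁻¹ := by rw [hk, conj_zpow_eq_zpow_mul hk]
    _ = y ^ 2 * x * (y ^ 2)⁻¹ := by rw [sq]; group
    _ = x := by rw [hj]; group

theorem zpow_sub_one_mul_eq_one (hk : y * x * y⁻¹ = x ^ k) (hj : y ^ 2 = x ^ j) :
    x ^ ((k - 1) * j) = 1 := by
  have : x ^ (k * j) = x ^ j :=
    calc x ^ (k * j) = y * y ^ 2 * y⁻¹ := by rw [hj, conj_zpow_eq_zpow_mul hk]
      _ = y ^ 2 := by group
      _ = x ^ j := hj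
  rw [sub_mul, one_mul, zpow_sub, this, mul_inv_cancel]

end Conjugation

section Classification

variable {G : Type*} [Group G] {x y : G} {k j : ℤ} {m : ℕ}

theorem isDihedralPres_or_of_conj_eq_zpow (hx : orderOf x = 2 ^ m) (hk : y * x * y⁻¹ = x ^ k)
    (hj : y ^ 2 = x ^ j) (hxy : y * x * y⁻¹ ≠ x)
    (hgen : ∀ t : ℤ, Subgroup.closure {x, y * x ^ t} = ⊤) :
    IsDihedralPres G (m + 1) ∨ IsGeneralizedQuaternionPres G (m + 1) ∨
      IsSemidihedralPres G (m + 1) ∨ IsModularPres G (m + 1) := by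
  have hpow (a b : ℤ) : x ^ a = x ^ b ↔ a ≡ b [ZMOD 2 ^ m] := by
    rw [zpow_eq_zpow_iff_modEq, hx, Nat.cast_pow, Nat.cast_ofNat]
  have hk2 : k * k ≡ 1 [ZMOD 2 ^ m] := (hpow _ _).mp (by rw [zpow_mul_self_eq hk hj, zpow_one])
  have hkj : (k - 1) * j ≡ 0 [ZMOD 2 ^ m] :=
    (hpow _ _).mp (by rw [zpow_sub_one_mul_eq_one hk hj, zpow_zero])
  have hk1 : ¬ k ≡ 1 [ZMOD 2 ^ m] := fun h ↦ hxy (by rw [hk, (hpow k 1).mpr h, zpow_one])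
  obtain ⟨m, rfl⟩ : ∃ m', m = m' + 2 :=
    ⟨m - 2, by have := Int.two_le_of_sq_modEq_one hk2 hk1; omega⟩
  obtain ⟨t, h⟩ := Int.exists_normalForm_of_sq_modEq_one hk2 hkj hk1
  have hsq := mul_zpow_sq hk hj t
  have hconj : y * x ^ t * x * (y * x ^ t)⁻¹ = x ^ k := by rw [← hk]; group
  have hN : x ^ ((2 : ℤ) ^ (m + 1)) = x ^ 2 ^ (m + 1) := by
    rw [← zpow_natCast, Nat.cast_pow, Nat.cast_ofNat]
  rcases h with ⟨hk', hj'⟩ | ⟨hk', hj'⟩ | ⟨hk', hj'⟩ | ⟨hk', hj'⟩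
  · refine .inl ⟨x, y * x ^ t, hx, ?_, ?_, hgen t⟩
    · rw [hsq, (hpow _ 0).mpr hj', zpow_zero]
    · rw [hconj, (hpow _ (-1)).mpr hk', zpow_neg_one]
  · refine .inr (.inl ⟨x, y * x ^ t, hx, ?_, ?_, hgen t⟩)
    · rw [hsq, (hpow _ _).mpr hj', hN]; rfl
    · rw [hconj, (hpow _ (-1)).mpr hk', zpow_neg_one]
  · refine .inr (.inr (.inl ⟨x, y * x ^ t, hx, ?_, ?_, hgen t⟩))
    · rw [hsq, (hpow _ 0).mpr hj', zpow_zero]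
    · rw [hconj, (hpow _ _).mpr hk', zpow_sub_one, hN]; rfl
  · refine .inr (.inr (.inr ⟨x, y * x ^ t, hx, ?_, ?_, hgen t⟩))
    · rw [hsq, (hpow _ 0).mpr hj', zpow_zero]
    · rw [hconj, (hpow _ _).mpr hk', zpow_add_one, hN, ← pow_succ]; rfl

end Classification

section Generation

variable {G : Type*} [Group G]

theorem Subgroup.eq_top_of_index_eq_two_of_lt {H K : Subgroup G} (hH : H.index = 2) (h : H < K) :
    K = ⊤ := by
  have : H.FiniteIndex := ⟨by omega⟩
  have hK := (finiteIndex_of_le h.le).index_ne_zero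
  have := index_strictAnti h
  exact index_eq_one.mp (by omega)

theorem mul_comm_of_closure_pair_eq_top {x y : G} (h : Subgroup.closure {x, y} = ⊤)
    (hxy : x * y = y * x) (a b : G) : a * b = b * a := by
  have hcomm : ∀ u ∈ ({x, y} : Set G), ∀ v ∈ ({x, y} : Set G), u * v = v * u := by
    rintro u (rfl | rfl) v (rfl | rfl) <;> first | rfl | exact hxy | exact hxy.symm
  have hmem (g : G) : g ∈ Set.centralizer (Set.centralizer {x, y}) :=
    Subgroup.closure_le_centralizer_centralizer _ (h ▸ Subgroup.mem_top g)
  exact Set.centralizer_centralizer_comm_of_comm hcomm a (hmem a) b (hmem b)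

end Generation

theorem stmt_7_general (G : Type*) [Group G] (h2 : ∃ n : ℕ, Nat.card G = 2 ^ n)
    (hnab : ¬ ∀ a b : G, a * b = b * a)
    (H : Subgroup G) (hcyc : IsCyclic H) (hidx : H.index = 2) :
    ∃ n : ℕ, Nat.card G = 2 ^ n ∧
      (IsDihedralPres G n ∨ IsGeneralizedQuaternionPres G n ∨
        IsSemidihedralPres G n ∨ IsModularPres G n) := by
  obtain ⟨n, hcard⟩ := h2
  obtain ⟨x, rfl⟩ := (H.isCyclic_iff_exists_zpowers_eq_top).mp hcyc
  obtain ⟨y, hy⟩ := SetLike.exists_not_mem_of_ne_top (Subgroup.zpowers x)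
    fun h ↦ by simp [h] at hidx
  obtain ⟨k, hk⟩ := Subgroup.mem_zpowers_iff.mp
    ((Subgroup.normal_of_index_eq_two hidx).conj_mem x (Subgroup.mem_zpowers x) y)
  obtain ⟨j, hj⟩ := Subgroup.mem_zpowers_iff.mp (Subgroup.sq_mem_of_index_two hidx y)
  have hgen (t : ℤ) : Subgroup.closure {x, y * x ^ t} = ⊤ := by
    refine Subgroup.eq_top_of_index_eq_two_of_lt hidx (SetLike.lt_iff_le_and_exists.mpr
      ⟨Subgroup.zpowers_le.mpr (Subgroup.subset_closure (by simp)), y * x ^ t,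
        Subgroup.subset_closure (by simp), ?_⟩)
    exact fun h ↦ hy (by simpa using mul_mem h (zpow_mem (Subgroup.mem_zpowers x) (-t)))
  have hxy : y * x * y⁻¹ ≠ x := fun h ↦
    hnab (mul_comm_of_closure_pair_eq_top (by simpa using hgen 0)
      (mul_inv_eq_iff_eq_mul.mp h).symm)
  have hord : orderOf x * 2 = 2 ^ n := by
    rw [← hcard, ← Subgroup.card_mul_index, hidx, Nat.card_zpowers]
  obtain ⟨m, rfl⟩ : ∃ m, n = m + 1 :=
    Nat.exists_eq_succ_of_ne_zero (by rintro rfl; rw [pow_zero] at hord; omega)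
  have hx : orderOf x = 2 ^ m := by rw [pow_succ] at hord; omega
  exact ⟨m + 1, hcard, isDihedralPres_or_of_conj_eq_zpow hx hk.symm hj.symm hxy hgen⟩

/-- A nonabelian finite 2-group with a cyclic subgroup of index 2 is dihedral,
generalized quaternion, semidihedral or modular. -/
theorem stmt_7 (G : Type*) [Group G] [Finite G] (h2 : ∃ n : ℕ, Nat.card G = 2 ^ n)
    (hnab : ¬ ∀ a b : G, a * b = b * a)
    (H : Subgroup G) (hcyc : IsCyclic H) (hidx : H.index = 2) :
    ∃ n : ℕ, Nat.card G = 2 ^ n ∧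
      (IsDihedralPres G n ∨ IsGeneralizedQuaternionPres G n ∨
        IsSemidihedralPres G n ∨ IsModularPres G n) :=
  stmt_7_general G h2 hnab H hcyc hidx
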